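/- arXiv:2603.20722 — 2 statements merged into one kernel-verified Lean document; each statement's English description precedes it below -/
import Mathlib

section
/- Let C = {u_{4i+j}, v_{4i+j+2} : i ∈ ℤ_n} be a perfect code in GP(n,k) for some j ∈ {0,1,2,3} and n ≡ 0 (mod 4). Then k is odd. -/
/-! Reduce indices modulo 4 (possible since `4 ∣ n`): `u_a` lies in the code iff `a ≡ j` and `v_a`
iff `a ≡ j + 2`. If `k ≡ 0 (mod 4)`, the vertex `v_{j+1}` is outside the code and all its neighbours
`u_{j+1}, v_{j+1±k}` are `≡ j + 1`, so it has no neighbour in the code. If `k ≡ 2 (mod 4)`, the vertex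
`v_j` is outside the code but has the two distinct neighbours `u_j` and `v_{j+k}` in it. -/

/-- The generalized Petersen graph GP(n,k): vertices are `Sum.inl i` (outer, u_i)
and `Sum.inr i` (inner, v_i) for `i : ZMod n`. -/
def GP (n k : ℕ) : SimpleGraph (ZMod n ⊕ ZMod n) where
  Adj x y :=
    match x, y with
    | .inl i, .inl j => i ≠ j ∧ (j = i + 1 ∨ i = j + 1)
    | .inl i, .inr j => i = j
    | .inr i, .inl j => i = j
    | .inr i, .inr j => i ≠ j ∧ (j = i + (k : ZMod n) ∨ i = j + (k : ZMod n))
  symm := by constructor; rintro (i|i) (j|j) h <;> simp_all <;> tauto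
  loopless := by constructor; rintro (i|i) h <;> simp_all

/-- A perfect code: an independent set such that every vertex not in `C`
has exactly one neighbor in `C`. -/
def IsPerfectCode {V : Type*} (G : SimpleGraph V) (C : Set V) : Prop :=
  (∀ x ∈ C, ∀ y ∈ C, ¬ G.Adj x y) ∧ ∀ x ∉ C, ∃! y, y ∈ C ∧ G.Adj x y

/-- A total perfect code: every vertex has exactly one neighbor in `C`. -/
def IsTotalPerfectCode {V : Type*} (G : SimpleGraph V) (C : Set V) : Prop :=
  ∀ x, ∃! y, y ∈ C ∧ G.Adj x y

theorem ZMod.exists_eq_mul_add_iff_castHom_eq {n m : ℕ} (h : m ∣ n) (a c : ZMod n) :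
    (∃ i : ZMod n, a = m * i + c) ↔ ZMod.castHom h (ZMod m) a = ZMod.castHom h (ZMod m) c := by
  constructor
  · rintro ⟨i, rfl⟩
    rw [map_add, map_mul, map_natCast, ZMod.natCast_self, zero_mul, zero_add]
  · intro hac
    obtain ⟨z, hz⟩ := ZMod.intCast_surjective (a - c)
    have hzm : ((z : ℤ) : ZMod m) = 0 := by
      rw [← map_intCast (ZMod.castHom h (ZMod m)), hz, map_sub, hac, sub_self]
    obtain ⟨t, rfl⟩ := (ZMod.intCast_zmod_eq_zero_iff_dvd z m).mp hzm
    exact ⟨t, by rw [← sub_eq_iff_eq_add, ← hz]; push_cast; ring⟩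

namespace IsPerfectCode

variable {V : Type*} {G : SimpleGraph V} {C : Set V}

theorem exists_adj_mem (hC : IsPerfectCode G C) {x : V} (hx : x ∉ C) : ∃ y ∈ C, G.Adj x y :=
  (hC.2 x hx).exists

theorem eq_of_adj_mem (hC : IsPerfectCode G C) {x y y' : V} (hx : x ∉ C) (hy : y ∈ C)
    (hy' : y' ∈ C) (hxy : G.Adj x y) (hxy' : G.Adj x y') : y = y' :=
  (hC.2 x hx).unique ⟨hy, hxy⟩ ⟨hy', hxy'⟩

end IsPerfectCode

namespace GP

variable {n k : ℕ} {a b : ZMod n}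

@[simp] theorem adj_inr_inl : (GP n k).Adj (.inr a) (.inl b) ↔ a = b := Iff.rfl

@[simp] theorem adj_inr_inr :
    (GP n k).Adj (.inr a) (.inr b) ↔ a ≠ b ∧ (b = a + k ∨ a = b + k) := Iff.rfl

end GP

def quadCode (n : ℕ) (j : ZMod n) : Set (ZMod n ⊕ ZMod n) :=
  {x | ∃ i : ZMod n, x = .inl (4 * i + j) ∨ x = .inr (4 * i + j + 2)}

section quadCode

variable {n : ℕ} {j a : ZMod n}

theorem inl_mem_quadCode_iff (h : 4 ∣ n) :
    .inl a ∈ quadCode n j ↔ ZMod.castHom h (ZMod 4) a = ZMod.castHom h (ZMod 4) j := by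
  simpa [quadCode] using ZMod.exists_eq_mul_add_iff_castHom_eq h a j

theorem inr_mem_quadCode_iff (h : 4 ∣ n) :
    .inr a ∈ quadCode n j ↔ ZMod.castHom h (ZMod 4) a = ZMod.castHom h (ZMod 4) j + 2 := by
  rw [← map_ofNat (ZMod.castHom h (ZMod 4)) 2, ← map_add]
  simpa [quadCode, add_assoc] using ZMod.exists_eq_mul_add_iff_castHom_eq h a (j + 2)

variable {k : ℕ}

theorem not_isPerfectCode_quadCode_of_natCast_eq_zero (h : 4 ∣ n) (hk : (k : ZMod 4) = 0) :
    ¬ IsPerfectCode (GP n k) (quadCode n j) := by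
  intro hC
  have hkπ : ZMod.castHom h (ZMod 4) k = 0 := by rw [map_natCast, hk]
  have hx : .inr (j + 1) ∉ quadCode n j := by
    rw [inr_mem_quadCode_iff h, map_add, map_one]
    grind
  obtain ⟨y, hyC, hxy⟩ := hC.exists_adj_mem hx
  rcases y with b | b
  · rw [GP.adj_inr_inl] at hxy
    rw [inl_mem_quadCode_iff h, ← hxy, map_add, map_one] at hyC
    grind
  · rw [GP.adj_inr_inr] at hxy
    rw [inr_mem_quadCode_iff h] at hyC
    rcases hxy.2 with rfl | hb
    · rw [map_add, map_add, map_one, hkπ] at hyC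
      grind
    · have := congrArg (ZMod.castHom h (ZMod 4)) hb
      rw [map_add, map_add, map_one, hkπ] at this
      grind

theorem not_isPerfectCode_quadCode_of_natCast_eq_two (h : 4 ∣ n) (hk0 : (k : ZMod n) ≠ 0)
    (hk : (k : ZMod 4) = 2) : ¬ IsPerfectCode (GP n k) (quadCode n j) := by
  intro hC
  have hx : .inr j ∉ quadCode n j := by
    rw [inr_mem_quadCode_iff h]
    grind
  have hu : .inl j ∈ quadCode n j := (inl_mem_quadCode_iff h).mpr rfl
  have hv : .inr (j + k) ∈ quadCode n j := by
    rw [inr_mem_quadCode_iff h, map_add, map_natCast, hk]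
  have hjk : j ≠ j + k := fun h' => hk0 (left_eq_add.mp h')
  exact Sum.inl_ne_inr <| hC.eq_of_adj_mem hx hu hv (GP.adj_inr_inl.mpr rfl)
    (GP.adj_inr_inr.mpr ⟨hjk, .inl rfl⟩)

end quadCode

theorem stmt_6_general (n k : ℕ) (hk0 : (k : ZMod n) ≠ 0) (h4 : n % 4 = 0)
    (j : ℕ)
    (hC : IsPerfectCode (GP n k)
      {x | ∃ i : ZMod n, x = .inl (4 * i + (j : ZMod n)) ∨
        x = .inr (4 * i + (j : ZMod n) + 2)}) :
    k % 2 = 1 := by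
  have hC : IsPerfectCode (GP n k) (quadCode n j) := hC
  have h4 : 4 ∣ n := Nat.dvd_of_mod_eq_zero h4
  by_contra hk
  have hk4 : (k : ZMod 4) = ((k % 4 : ℕ) : ZMod 4) := (ZMod.natCast_mod k 4).symm
  rcases (by omega : k % 4 = 0 ∨ k % 4 = 2) with hk' | hk' <;> rw [hk'] at hk4
  · exact not_isPerfectCode_quadCode_of_natCast_eq_zero h4 hk4 hC
  · exact not_isPerfectCode_quadCode_of_natCast_eq_two h4 hk0 hk4 hC

/-- Step 4 of the proof of Theorem 1.1: if {u_{4i+j}, v_{4i+j+2} : i ∈ ℤ_n} is a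
perfect code in GP(n,k) with n ≡ 0 (mod 4), then k is odd. -/
theorem stmt_6 (n k : ℕ) (hn : 3 ≤ n) (hk0 : (k : ZMod n) ≠ 0) (h4 : n % 4 = 0)
    (j : ℕ) (hj : j < 4)
    (hC : IsPerfectCode (GP n k)
      {x | ∃ i : ZMod n, x = .inl (4 * i + (j : ZMod n)) ∨
        x = .inr (4 * i + (j : ZMod n) + 2)}) :
    k % 2 = 1 :=
  stmt_6_general n k hk0 h4 j hC
end

section
/- Let C be a total perfect code in GP(n,k) such that for every m ∈ ℤ_n, u_m ∈ C if and only if v_m ∈ C. If u_ℓ, v_ℓ ∈ C, then u_{ℓ+3}, v_{ℓ+3} ∈ C; consequently C = {u_{3i+j}, v_{3i+j} : i ∈ ℤ_n} where j ≡ ℓ (mod 3), and moreover k ≢ 0 (mod 3). -/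
/-! Let `S = {m | u_m ∈ C} = {m | v_m ∈ C}`. If `m ∈ S`, the code neighbour of `u_m` is `v_m`, so
`m + 1 ∉ S`; the code neighbour of `u_{m+1}` is `u_m`, so `m + 2 ∉ S`; hence the code neighbour of
`u_{m+2}` can only be `u_{m+3}`, i.e. `m + 3 ∈ S`. Iterating from `ℓ`, `S = ℓ + 3 ℤ_n`. Finally, if
`3 ∣ k` then `v_ℓ` has the two code neighbours `u_ℓ` and `v_{ℓ+k}`. -/

theorem ZMod.natCast_ne_zero_of_pos_of_lt {a n : ℕ} (ha : 0 < a) (han : a < n) :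
    (a : ZMod n) ≠ 0 := by
  rw [Ne, ZMod.natCast_eq_zero_iff]
  exact fun h => (Nat.le_of_dvd ha h).not_gt han

namespace IsTotalPerfectCode

variable {V : Type*} {G : SimpleGraph V} {C : Set V}

theorem exists_adj (hC : IsTotalPerfectCode G C) (x : V) : ∃ y ∈ C, G.Adj x y :=
  (hC x).exists

theorem eq_of_adj_of_adj (hC : IsTotalPerfectCode G C) {x y z : V} (hy : y ∈ C) (hz : z ∈ C)
    (hxy : G.Adj x y) (hxz : G.Adj x z) : y = z :=
  (hC x).unique ⟨hy, hxy⟩ ⟨hz, hxz⟩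

end IsTotalPerfectCode

namespace GP

open Sum

variable {n k : ℕ}

theorem adj_inl_inr (i : ZMod n) : (GP n k).Adj (inl i) (inr i) := rfl

theorem adj_inl_add_one (h1 : (1 : ZMod n) ≠ 0) (i : ZMod n) :
    (GP n k).Adj (inl i) (inl (i + 1)) :=
  ⟨fun h => h1 (by linear_combination -h), Or.inl rfl⟩

theorem adj_inr_add (hk : (k : ZMod n) ≠ 0) (i : ZMod n) :
    (GP n k).Adj (inr i) (inr (i + k)) :=
  ⟨fun h => hk (by linear_combination -h), Or.inl rfl⟩

theorem adj_inl_inl_iff (h1 : (1 : ZMod n) ≠ 0) {i j : ZMod n} :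
    (GP n k).Adj (inl i) (inl j) ↔ j = i + 1 ∨ i = j + 1 := by
  refine ⟨And.right, fun h => ⟨?_, h⟩⟩
  rintro rfl
  exact h1 (by rcases h with h | h <;> linear_combination -h)

section SpokeCode

variable {C : Set (ZMod n ⊕ ZMod n)} (hC : IsTotalPerfectCode (GP n k) C)
include hC

theorem inl_add_one_notMem (hUV : ∀ m : ZMod n, inl m ∈ C ↔ inr m ∈ C)
    (h1 : (1 : ZMod n) ≠ 0) {m : ZMod n} (hm : inl m ∈ C) : inl (m + 1) ∉ C := fun h =>
  Sum.inr_ne_inl (hC.eq_of_adj_of_adj ((hUV m).1 hm) h (adj_inl_inr m) (adj_inl_add_one h1 m))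

theorem inl_add_two_notMem (h1 : (1 : ZMod n) ≠ 0) (h2 : (2 : ZMod n) ≠ 0) {m : ZMod n}
    (hm : inl m ∈ C) : inl (m + 2) ∉ C := fun h => by
  have hadj : (GP n k).Adj (inl (m + 1)) (inl (m + 2)) := by
    simpa [add_assoc, one_add_one_eq_two] using adj_inl_add_one (k := k) h1 (m + 1)
  have := hC.eq_of_adj_of_adj hm h (adj_inl_add_one h1 m).symm hadj
  exact h2 (by linear_combination (inl.inj this).symm)

variable (hUV : ∀ m : ZMod n, inl m ∈ C ↔ inr m ∈ C) (h1 : (1 : ZMod n) ≠ 0)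
  (h2 : (2 : ZMod n) ≠ 0)
include hUV h1 h2

theorem inl_add_three_mem {m : ZMod n} (hm : inl m ∈ C) : inl (m + 3) ∈ C := by
  obtain ⟨y, hyC, hadj⟩ := hC.exists_adj (inl (m + 2))
  rcases y with j | j
  · rcases (adj_inl_inl_iff h1).1 hadj with rfl | hj
    · convert hyC using 2; ring
    · obtain rfl : j = m + 1 := by linear_combination -hj
      exact absurd hyC (inl_add_one_notMem hC hUV h1 hm)
  · obtain rfl : m + 2 = j := hadj
    exact absurd ((hUV _).2 hyC) (inl_add_two_notMem hC h1 h2 hm)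

theorem inl_add_three_mul_mem {l : ZMod n} (hl : inl l ∈ C) (j : ℕ) : inl (l + 3 * j) ∈ C := by
  induction j with
  | zero => simpa using hl
  | succ j ih => simpa [mul_add, add_assoc] using inl_add_three_mem hC hUV h1 h2 ih

theorem inl_mem_iff [NeZero n] {l : ZMod n} (hl : inl l ∈ C) {m : ZMod n} :
    inl m ∈ C ↔ ∃ i : ZMod n, m = 3 * i + l := by
  constructor
  · intro hm
    obtain ⟨q, r, hr, rfl⟩ : ∃ q r : ℕ, r < 3 ∧ m = l + 3 * q + r := by
      refine ⟨(m - l).val / 3, (m - l).val % 3, Nat.mod_lt _ three_pos, ?_⟩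
      have hval := ZMod.natCast_zmod_val (m - l)
      rw [← Nat.div_add_mod (m - l).val 3] at hval
      push_cast at hval
      linear_combination -hval
    have hq := inl_add_three_mul_mem hC hUV h1 h2 hl q
    interval_cases r
    · exact ⟨q, by push_cast; ring⟩
    · exact absurd hm (by simpa using inl_add_one_notMem hC hUV h1 hq)
    · exact absurd hm (by simpa using inl_add_two_notMem hC h1 h2 hq)
  · rintro ⟨i, rfl⟩
    simpa [add_comm, ZMod.natCast_zmod_val] using inl_add_three_mul_mem hC hUV h1 h2 hl i.val

theorem eq_setOf_spokes [NeZero n] {l : ZMod n} (hl : inl l ∈ C) :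
    C = {x | ∃ i : ZMod n, x = inl (3 * i + l) ∨ x = inr (3 * i + l)} := by
  ext (m | m)
  · simp [inl_mem_iff hC hUV h1 h2 hl]
  · simp [← hUV, inl_mem_iff hC hUV h1 h2 hl]

theorem mod_three_ne_zero (hk : (k : ZMod n) ≠ 0) {l : ZMod n} (hl : inl l ∈ C) : k % 3 ≠ 0 := by
  intro hk3
  obtain ⟨t, rfl⟩ : 3 ∣ k := Nat.dvd_of_mod_eq_zero hk3
  have hlk : inl (l + ((3 * t : ℕ) : ZMod n)) ∈ C := by
    simpa using inl_add_three_mul_mem hC hUV h1 h2 hl t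
  exact Sum.inl_ne_inr
    (hC.eq_of_adj_of_adj hl ((hUV _).1 hlk) (adj_inl_inr l).symm (adj_inr_add hk l))

end SpokeCode

end GP

theorem stmt_12_general (n k : ℕ) (hn : 3 ≤ n) (hk0 : (k : ZMod n) ≠ 0)
    (C : Set (ZMod n ⊕ ZMod n)) (hC : IsTotalPerfectCode (GP n k) C)
    (hUV : ∀ m : ZMod n, Sum.inl m ∈ C ↔ Sum.inr m ∈ C)
    (l : ZMod n) (hu : Sum.inl l ∈ C) :
    (Sum.inl (l + 3) ∈ C ∧ Sum.inr (l + 3) ∈ C) ∧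
    C = {x | ∃ i : ZMod n, x = .inl (3 * i + l) ∨ x = .inr (3 * i + l)} ∧
    k % 3 ≠ 0 := by
  have : NeZero n := ⟨by omega⟩
  have h1 : (1 : ZMod n) ≠ 0 := by
    exact_mod_cast ZMod.natCast_ne_zero_of_pos_of_lt one_pos (by omega : 1 < n)
  have h2 : (2 : ZMod n) ≠ 0 := by
    exact_mod_cast ZMod.natCast_ne_zero_of_pos_of_lt two_pos (by omega : 2 < n)
  have hu3 := GP.inl_add_three_mem hC hUV h1 h2 hu
  exact ⟨⟨hu3, (hUV _).1 hu3⟩, GP.eq_setOf_spokes hC hUV h1 h2 hu,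
    GP.mod_three_ne_zero hC hUV h1 h2 hk0 hu⟩

/-- Case 1 of the proof of Theorem 1.2: if C is a total perfect code in GP(n,k)
(n ≡ 0 (mod 3)) with u_m ∈ C ↔ v_m ∈ C for all m, and u_l, v_l ∈ C, then
u_{l+3}, v_{l+3} ∈ C; consequently C = {u_{3i+l}, v_{3i+l} : i ∈ ℤ_n} and
k ≢ 0 (mod 3). -/
theorem stmt_12 (n k : ℕ) (hn : 3 ≤ n) (hk0 : (k : ZMod n) ≠ 0) (h3 : n % 3 = 0)
    (C : Set (ZMod n ⊕ ZMod n)) (hC : IsTotalPerfectCode (GP n k) C)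
    (hUV : ∀ m : ZMod n, Sum.inl m ∈ C ↔ Sum.inr m ∈ C)
    (l : ZMod n) (hu : Sum.inl l ∈ C) (hv : Sum.inr l ∈ C) :
    (Sum.inl (l + 3) ∈ C ∧ Sum.inr (l + 3) ∈ C) ∧
    C = {x | ∃ i : ZMod n, x = .inl (3 * i + l) ∨ x = .inr (3 * i + l)} ∧
    k % 3 ≠ 0 :=
  stmt_12_general n k hn hk0 C hC hUV l hu
end
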